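/- Let U = {(x,y,y₁,y₂,z) ∈ ℝ⁵ : y₂ ≠ 0}, X₁ = ∂/∂y₂, X₂ = ∂/∂x + y₁ ∂/∂y + y₂ ∂/∂y₁ + (y + y₂^{1/3}) ∂/∂z, and S₂ = x ∂/∂x − y ∂/∂y − 2y₁ ∂/∂y₁ − 3y₂ ∂/∂y₂. Then on U one has [S₂, X₁] = 3 X₁ and [S₂, X₂] = −X₂. In particular, S₂ is an infinitesimal symmetry of the Monge distribution of z' = y + (y'')^{1/3}. -/

import Mathlib

/-- Lie bracket of vector fields on ℝ⁵, `[V,W](p) = DW(p)(V(p)) − DV(p)(W(p))`. -/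
noncomputable def lieBracket (V W : (Fin 5 → ℝ) → (Fin 5 → ℝ)) :
    (Fin 5 → ℝ) → (Fin 5 → ℝ) :=
  fun p => fderiv ℝ W p (V p) - fderiv ℝ V p (W p)

/-- The real odd cube root: `cbrt t = sign(t) · |t|^(1/3)`. -/
noncomputable def cbrt (t : ℝ) : ℝ := Real.sign t * |t| ^ ((1 : ℝ) / 3)

/-- `X₁ = ∂/∂y₂`, coordinates `(x, y, y₁, y₂, z) = (p 0, p 1, p 2, p 3, p 4)`. -/
noncomputable def X₁ : (Fin 5 → ℝ) → (Fin 5 → ℝ) := fun _ => ![0, 0, 0, 1, 0]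

/-- `X₂ = ∂/∂x + y₁ ∂/∂y + y₂ ∂/∂y₁ + (y + y₂^{1/3}) ∂/∂z`. -/
noncomputable def X₂ : (Fin 5 → ℝ) → (Fin 5 → ℝ) :=
  fun p => ![1, p 2, p 3, 0, p 1 + cbrt (p 3)]

/-- `S₂ = x ∂/∂x − y ∂/∂y − 2y₁ ∂/∂y₁ − 3y₂ ∂/∂y₂`. -/
noncomputable def S₂ : (Fin 5 → ℝ) → (Fin 5 → ℝ) :=
  fun p => ![p 0, -p 1, -2 * p 2, -3 * p 3, 0]

/-!
`S₂` is a diagonal linear vector field, so `[S₂, X] = DX(S₂) − S₂ ∘ X`. For the constant field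
`X₁` only `−S₂(X₁) = 3X₁` survives. For `X₂`, every component is weighted homogeneous for the
weights `(1, −1, −2, −3, 0)` of `S₂`; in the `z`-component this comes down to Euler's identity
`t · cbrt'(t) = cbrt(t) / 3` for the cube root, homogeneous of degree `1/3`.
-/

lemma cbrt_neg (t : ℝ) : cbrt (-t) = -cbrt t := by
  simp [cbrt, Real.sign_neg, abs_neg]

lemma cbrt_of_pos {t : ℝ} (ht : 0 < t) : cbrt t = t ^ ((1 : ℝ) / 3) := by
  simp [cbrt, Real.sign_of_pos ht, abs_of_pos ht]

lemma hasDerivAt_cbrt_of_pos {t : ℝ} (ht : 0 < t) : HasDerivAt cbrt (cbrt t / (3 * t)) t := by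
  have h := Real.hasDerivAt_rpow_const (x := t) (p := (1 : ℝ) / 3) (Or.inl ht.ne')
  rw [Real.rpow_sub_one ht.ne', ← cbrt_of_pos ht] at h
  refine (h.congr_of_eventuallyEq ?_).congr_deriv (by ring)
  exact Filter.eventually_of_mem (Ioi_mem_nhds ht) fun x hx => cbrt_of_pos hx

lemma hasDerivAt_cbrt {t : ℝ} (ht : t ≠ 0) : HasDerivAt cbrt (cbrt t / (3 * t)) t := by
  rcases ht.lt_or_gt with hneg | hpos
  · have hodd : cbrt = fun x => -cbrt (-x) := by
      funext x
      rw [cbrt_neg, neg_neg]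
    have h : HasDerivAt (fun x => -cbrt (-x)) (-(cbrt (-t) / (3 * -t) * -1)) t :=
      ((hasDerivAt_cbrt_of_pos (neg_pos.mpr hneg)).comp t (hasDerivAt_neg t)).neg
    rw [← hodd, cbrt_neg] at h
    exact h.congr_deriv (by field_simp)
  · exact hasDerivAt_cbrt_of_pos hpos

lemma lieBracket_eq_of_hasFDerivAt {V W : (Fin 5 → ℝ) → (Fin 5 → ℝ)}
    {A B : (Fin 5 → ℝ) →L[ℝ] (Fin 5 → ℝ)} {p : Fin 5 → ℝ}
    (hV : HasFDerivAt V A p) (hW : HasFDerivAt W B p) :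
    lieBracket V W p = B (V p) - A (W p) := by
  rw [lieBracket, hV.fderiv, hW.fderiv]

lemma S₂_eq_mul : S₂ = ContinuousLinearMap.mul ℝ (Fin 5 → ℝ) ![1, -1, -2, -3, 0] := by
  funext p i
  fin_cases i <;> simp [S₂]

lemma hasFDerivAt_S₂ (p : Fin 5 → ℝ) :
    HasFDerivAt S₂ (ContinuousLinearMap.mul ℝ (Fin 5 → ℝ) ![1, -1, -2, -3, 0]) p := by
  rw [S₂_eq_mul]
  exact ContinuousLinearMap.hasFDerivAt _

open ContinuousLinearMap in
lemma hasFDerivAt_X₂ {p : Fin 5 → ℝ} (hp : p 3 ≠ 0) :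
    HasFDerivAt X₂
      (pi (![0, proj 2, proj 3, 0, proj 1 + (cbrt (p 3) / (3 * p 3)) • proj 3] :
        Fin 5 → (Fin 5 → ℝ) →L[ℝ] ℝ)) p := by
  rw [hasFDerivAt_pi]
  intro i
  fin_cases i
  · exact hasFDerivAt_const 1 p
  · exact hasFDerivAt_apply 2 p
  · exact hasFDerivAt_apply 3 p
  · exact hasFDerivAt_const 0 p
  · exact (hasFDerivAt_apply 1 p).add
      ((hasDerivAt_cbrt hp).comp_hasFDerivAt (f := fun x : Fin 5 → ℝ => x 3) p
        (hasFDerivAt_apply 3 p))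

/-- On `U = {y₂ ≠ 0}` one has `[S₂, X₁] = 3X₁` and `[S₂, X₂] = −X₂`; in particular
`S₂` is an infinitesimal symmetry of the Monge distribution of `z' = y + (y'')^{1/3}`. -/
theorem symmetry_S₂ :
    ∀ p : Fin 5 → ℝ, p 3 ≠ 0 →
      lieBracket S₂ X₁ p = (3 : ℝ) • X₁ p ∧
      lieBracket S₂ X₂ p = -X₂ p := by
  intro p hp
  have hX₁ : HasFDerivAt (𝕜 := ℝ) X₁ 0 p := hasFDerivAt_const _ p
  constructor
  · rw [lieBracket_eq_of_hasFDerivAt (hasFDerivAt_S₂ p) hX₁]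
    funext i
    fin_cases i <;> simp [X₁]
  · rw [lieBracket_eq_of_hasFDerivAt (hasFDerivAt_S₂ p) (hasFDerivAt_X₂ hp)]
    funext i
    fin_cases i <;> simp [X₂, S₂, hp] <;> ring
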